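/- arXiv:2406.08161 — 3 statements merged into one kernel-verified Lean document; each statement's English description precedes it below -/
import Mathlib

section
/- If Z(a,b,c) = [[c-b, c+a+b, c-a], [c-a+b, c, c+a-b], [c+a, c-a-b, c+b]] is a 3×3 integer matrix such that the entrywise square Z(a,b,c)^{∘2} is also a magic square, then a = 0 and b = 0. Consequently every 2-multimagic square of order 3 has all entries equal. -/
/-- A 3×3 integer matrix is a magic square: all row sums, column sums,
and both main diagonal sums are equal. -/
def IsMagicSquare3 (Z : Matrix (Fin 3) (Fin 3) ℤ) : Prop :=
  ∃ s : ℤ, (∀ i, ∑ j, Z i j = s) ∧ (∀ j, ∑ i, Z i j = s) ∧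
    (∑ i, Z i i = s) ∧ (∑ i, Z i (Fin.rev i) = s)

/-- The parametrized 3×3 magic square Z(a,b,c). -/
def Zabc (a b c : ℤ) : Matrix (Fin 3) (Fin 3) ℤ :=
  !![c - b, c + (a + b), c - a;
     c - (a - b), c, c + (a - b);
     c + a, c - (a + b), c + b]

lemma key (a b c : ℤ)
    (h : IsMagicSquare3 (Matrix.of fun i j => (Zabc a b c) i j ^ 2)) :
    a = 0 ∧ b = 0 := by
  obtain ⟨s, hr, _, hd, ha⟩ := h
  have h0 := hr 0
  have h1 := hr 1
  simp only [Fin.sum_univ_three, Zabc, Matrix.of_apply, Matrix.cons_val', Matrix.cons_val_zero,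
    Matrix.cons_val_one, Matrix.head_cons, Matrix.empty_val', Matrix.cons_val_fin_one,
    Matrix.head_fin_const, Matrix.cons_val_two, Matrix.tail_cons, Fin.rev] at h0 h1 hd ha
  norm_num [Fin.rev] at hd ha
  have hab : a * b = 0 := by nlinarith [sq_nonneg a, sq_nonneg b]
  have ha0 : a = 0 := by nlinarith [sq_nonneg a]
  have hb0 : b = 0 := by nlinarith [sq_nonneg b]
  exact ⟨ha0, hb0⟩

theorem stmt1 (a b c : ℤ)
    (h : IsMagicSquare3 (Matrix.of fun i j => (Zabc a b c) i j ^ 2)) :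
    a = 0 ∧ b = 0 ∧
      ∀ W : Matrix (Fin 3) (Fin 3) ℤ, IsMagicSquare3 W →
        IsMagicSquare3 (Matrix.of fun i j => W i j ^ 2) →
        ∀ i j i' j', W i j = W i' j' := by
  obtain ⟨ha0, hb0⟩ := key a b c h
  refine ⟨ha0, hb0, ?_⟩
  intro W hW hW2 i j i' j'
  obtain ⟨s, hr, hc, hd, hanti⟩ := hW
  have hr0 := hr 0; have hr1 := hr 1; have hr2 := hr 2
  have hc0 := hc 0; have hc1 := hc 1; have hc2 := hc 2
  simp only [Fin.sum_univ_three, Fin.rev] at hr0 hr1 hr2 hc0 hc1 hc2 hd hanti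
  norm_num [Fin.rev] at hd hanti
  have hanti2 : W 0 2 + W 1 1 + W 2 0 = s := hanti
  set c' := W 1 1 with hc'
  have hWeq : W = Zabc (W 2 0 - c') (W 2 2 - c') c' := Matrix.ext fun i j => by
    fin_cases i <;> fin_cases j <;> simp [Zabc] <;> linarith
  have hkey := key (W 2 0 - c') (W 2 2 - c') c' (by rw [← hWeq]; exact hW2)
  obtain ⟨ea, eb⟩ := hkey
  rw [hWeq]
  fin_cases i <;> fin_cases j <;> fin_cases i' <;> fin_cases j' <;>
    simp [Zabc] <;> linarith
end

section
/- For every nonempty finite set J ⊆ [N]², the matrix A_J whose columns are the concatenated basis vectors (e_N(i), e_N(j)) ∈ ℝ^{2N} for (i,j) ∈ J satisfies rank(A_J) ≥ ⌈2√|J|⌉ − 1. -/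
/-- The vector in ℝ^{2N} obtained by concatenating the i-th and j-th
standard basis vectors of ℝ^N, for a pair (i,j). -/
def colVec (N : ℕ) (p : Fin N × Fin N) : (Fin N ⊕ Fin N) → ℝ :=
  Sum.elim (Pi.single p.1 1) (Pi.single p.2 1)

open Finset

theorem sum_sq_le {α : Type*} (t : α → ℕ) :
    ∀ {s : Finset α}, s.Nonempty → (∀ a ∈ s, 1 ≤ t a) →
    ∑ a ∈ s, (t a + 1)^2 ≤ (∑ a ∈ s, t a + 1)^2 := by
  intro s hs
  induction hs using Finset.Nonempty.cons_induction with
  | singleton a => intro _; simp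
  | cons a s ha hs ih =>
    intro h
    rw [Finset.sum_cons, Finset.sum_cons]
    have h1 : 1 ≤ t a := h a (Finset.mem_cons_self a s)
    have ih' := ih (fun b hb => h b (Finset.mem_cons_of_mem hb))
    obtain ⟨b, hb⟩ := hs
    have h2 : 1 ≤ ∑ c ∈ s, t c :=
      le_trans (h b (Finset.mem_cons_of_mem hb)) (Finset.single_le_sum (fun c _ => Nat.zero_le _) hb)
    nlinarith [ih', h1, h2]

theorem stmt9 (N : ℕ) (J : Finset (Fin N × Fin N)) (hJ : J.Nonempty) :
    ⌈2 * Real.sqrt J.card⌉₊ - 1 ≤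
      Module.finrank ℝ ↥(Submodule.span ℝ (colVec N '' ↑J)) := by
  classical
  set W : Submodule ℝ ((Fin N ⊕ Fin N) → ℝ) := Submodule.span ℝ (colVec N '' ↑J) with hWdef
  set r := Module.finrank ℝ W with hrdef
  -- the graph
  set G : SimpleGraph (Fin N ⊕ Fin N) :=
    SimpleGraph.fromRel (fun u w => ∃ p ∈ J, u = Sum.inl p.1 ∧ w = Sum.inr p.2) with hGdef
  -- component representative function
  let f : (Fin N ⊕ Fin N) → (Fin N ⊕ Fin N) := fun u => (G.connectedComponentMk u).exists_rep.choose
  have hfmk : ∀ u, G.connectedComponentMk (f u) = G.connectedComponentMk u :=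
    fun u => (G.connectedComponentMk u).exists_rep.choose_spec
  have hfiff : ∀ u w, f u = f w ↔ G.Reachable u w := by
    intro u w
    constructor
    · intro h
      have : G.connectedComponentMk u = G.connectedComponentMk w := by
        rw [← hfmk u, ← hfmk w, h]
      exact SimpleGraph.ConnectedComponent.eq.mp this
    · intro h
      have : G.connectedComponentMk u = G.connectedComponentMk w :=
        SimpleGraph.ConnectedComponent.eq.mpr h
      simp only [f, this]
  have hfreach : ∀ u, G.Reachable u (f u) :=
    fun u => (SimpleGraph.ConnectedComponent.eq.mp (hfmk u)).symm
  -- colVec as sum of singles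
  have hcol : ∀ p : Fin N × Fin N,
      colVec N p = Pi.single (Sum.inl p.1) 1 + Pi.single (Sum.inr p.2) (1:ℝ) := by
    intro p; funext v
    cases v with
    | inl a => simp [colVec, Pi.single_apply]
    | inr a => simp [colVec, Pi.single_apply]
  have hedge : ∀ p ∈ J, (Pi.single (Sum.inl p.1) 1 + Pi.single (Sum.inr p.2) (1:ℝ)) ∈ W := by
    intro p hp
    rw [← hcol p]
    exact Submodule.subset_span ⟨p, hp, rfl⟩
  have hAdjW : ∀ u w, G.Adj u w → (Pi.single u 1 + Pi.single w (1:ℝ)) ∈ W := by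
    intro u w h
    rw [hGdef, SimpleGraph.fromRel_adj] at h
    rcases h.2 with ⟨p, hp, h1, h2⟩ | ⟨p, hp, h1, h2⟩
    · rw [h1, h2]; exact hedge p hp
    · rw [h1, h2, add_comm]; exact hedge p hp
  -- reachability gives span membership in the quotient
  have hreach : ∀ u w, G.Reachable u w →
      W.mkQ (Pi.single u 1) ∈ Submodule.span ℝ {W.mkQ (Pi.single w 1)} := by
    intro u w h
    rw [SimpleGraph.reachable_iff_reflTransGen] at h
    induction h using Relation.ReflTransGen.head_induction_on with
    | refl => exact Submodule.mem_span_singleton_self _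
    | head hadj _ ih =>
      rename_i a b _
      have hab : W.mkQ (Pi.single a 1 + Pi.single b 1) = 0 := by
        rw [Submodule.mkQ_apply, Submodule.Quotient.mk_eq_zero]
        exact hAdjW a b hadj
      have heq : W.mkQ (Pi.single a 1) = - W.mkQ (Pi.single b 1) := by
        rw [map_add] at hab
        exact eq_neg_of_add_eq_zero_left hab
      rw [heq]
      exact Submodule.neg_mem _ ih
  -- vertex sets
  set Rset : Finset (Fin N) := J.image Prod.fst with hRset
  set Cset : Finset (Fin N) := J.image Prod.snd with hCset
  set U : Finset (Fin N ⊕ Fin N) := Rset.image Sum.inl ∪ Cset.image Sum.inr with hUdef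
  set C : Finset (Fin N ⊕ Fin N) := U.image f with hCdef
  -- spanning of the quotient
  set s0 : Finset (Fin N ⊕ Fin N) := (Finset.univ \ U) ∪ C with hs0
  have hspan : ∀ u : Fin N ⊕ Fin N, W.mkQ (Pi.single u 1) ∈
      Submodule.span ℝ ((fun v => W.mkQ (Pi.single v 1)) '' ↑s0) := by
    intro u
    by_cases hu : u ∈ U
    · have hfu : f u ∈ s0 := Finset.mem_union_right _ (Finset.mem_image_of_mem f hu)
      refine Submodule.span_mono ?_ (hreach u (f u) (hfreach u))
      intro x hx
      rw [Set.mem_singleton_iff] at hx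
      exact ⟨f u, hfu, hx.symm⟩
    · exact Submodule.subset_span ⟨u, Finset.mem_union_left _ (by simp [hu]), rfl⟩
  have hspanTop : Submodule.span ℝ ((fun v => W.mkQ (Pi.single v 1)) '' ↑s0) = ⊤ := by
    rw [eq_top_iff]
    have hsingles : Submodule.span ℝ (Set.range fun v : Fin N ⊕ Fin N => (Pi.single v 1 : (Fin N ⊕ Fin N) → ℝ)) = ⊤ := by
      have := (Pi.basisFun ℝ (Fin N ⊕ Fin N)).span_eq
      simpa [Pi.basisFun] using this
    intro x _
    have hx : x ∈ (⊤ : Submodule ℝ (((Fin N ⊕ Fin N) → ℝ) ⧸ W)) := trivial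
    obtain ⟨y, rfl⟩ := W.mkQ_surjective x
    have hy : y ∈ Submodule.span ℝ (Set.range fun v : Fin N ⊕ Fin N => (Pi.single v 1 : (Fin N ⊕ Fin N) → ℝ)) := by
      rw [hsingles]; trivial
    refine Submodule.span_induction ?_ ?_ ?_ ?_ hy
    · rintro z ⟨v, rfl⟩
      exact hspan v
    · simp
    · intro a b _ _ ha hb; rw [map_add]; exact Submodule.add_mem _ ha hb
    · intro c a _ ha; rw [map_smul]; exact Submodule.smul_mem _ c ha
  -- finrank of quotient bounded by card of spanning set
  have hQle : Module.finrank ℝ (((Fin N ⊕ Fin N) → ℝ) ⧸ W) ≤ s0.card := by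
    have h1 : Module.finrank ℝ
        (Submodule.span ℝ ((fun v => W.mkQ (Pi.single v 1)) '' ↑s0)) ≤
        (s0.image (fun v => W.mkQ (Pi.single v 1))).card := by
      rw [← Finset.coe_image]
      exact finrank_span_finset_le_card _
    rw [hspanTop] at h1
    calc Module.finrank ℝ (((Fin N ⊕ Fin N) → ℝ) ⧸ W)
        = Module.finrank ℝ (⊤ : Submodule ℝ (((Fin N ⊕ Fin N) → ℝ) ⧸ W)) := (finrank_top ℝ _).symm
      _ ≤ (s0.image (fun v => W.mkQ (Pi.single v 1))).card := h1
      _ ≤ s0.card := Finset.card_image_le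
  have hrk : Module.finrank ℝ (((Fin N ⊕ Fin N) → ℝ) ⧸ W) + r = N + N := by
    rw [hrdef, Submodule.finrank_quotient_add_finrank, Module.finrank_pi]
    simp
  have hcardV : (Finset.univ \ U).card + U.card = N + N := by
    rw [Finset.card_sdiff_add_card_eq_card (Finset.subset_univ U), Finset.card_univ]
    simp
  have hs0card : s0.card ≤ (Finset.univ \ U).card + C.card := Finset.card_union_le _ _
  have hUle : U.card ≤ r + C.card := by omega
  -- combinatorics
  have hsame : ∀ p ∈ J, f (Sum.inl p.1) = f (Sum.inr p.2) := by
    intro p hp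
    rw [hfiff]
    exact SimpleGraph.Adj.reachable (by
      rw [hGdef, SimpleGraph.fromRel_adj]
      exact ⟨by simp, Or.inl ⟨p, hp, rfl, rfl⟩⟩)
  set Rk : (Fin N ⊕ Fin N) → Finset (Fin N) := fun κ => Rset.filter (fun i => f (Sum.inl i) = κ) with hRk
  set Ck : (Fin N ⊕ Fin N) → Finset (Fin N) := fun κ => Cset.filter (fun j => f (Sum.inr j) = κ) with hCk
  -- fiber cardinality of U
  have hfib : ∀ κ, (U.filter (fun u => f u = κ)).card = (Rk κ).card + (Ck κ).card := by
    intro κ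
    rw [hUdef, Finset.filter_union]
    have e1 : (Rset.image Sum.inl).filter (fun u => f u = κ) = (Rk κ).image Sum.inl := by
      ext u
      simp only [Finset.mem_filter, Finset.mem_image, hRk]
      constructor
      · rintro ⟨⟨i, hi, rfl⟩, h2⟩; exact ⟨i, ⟨hi, h2⟩, rfl⟩
      · rintro ⟨i, ⟨hi, h2⟩, rfl⟩; exact ⟨⟨i, hi, rfl⟩, h2⟩
    have e2 : (Cset.image Sum.inr).filter (fun u => f u = κ) = (Ck κ).image Sum.inr := by
      ext u
      simp only [Finset.mem_filter, Finset.mem_image, hCk]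
      constructor
      · rintro ⟨⟨i, hi, rfl⟩, h2⟩; exact ⟨i, ⟨hi, h2⟩, rfl⟩
      · rintro ⟨i, ⟨hi, h2⟩, rfl⟩; exact ⟨⟨i, hi, rfl⟩, h2⟩
    rw [e1, e2, Finset.card_union_of_disjoint, Finset.card_image_of_injective _ Sum.inl_injective,
      Finset.card_image_of_injective _ Sum.inr_injective]
    · rw [Finset.disjoint_left]
      rintro u hu1 hu2
      obtain ⟨i, _, rfl⟩ := Finset.mem_image.mp hu1
      obtain ⟨j, _, hj⟩ := Finset.mem_image.mp hu2
      exact Sum.inl_ne_inr hj.symm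
  have hmemU : ∀ p ∈ J, Sum.inl p.1 ∈ U := by
    intro p hp
    exact Finset.mem_union_left _ (Finset.mem_image_of_mem _ (Finset.mem_image_of_mem _ hp))
  have hUsum : U.card = ∑ κ ∈ C, (U.filter (fun u => f u = κ)).card :=
    Finset.card_eq_sum_card_fiberwise (fun u hu => Finset.mem_image_of_mem f hu)
  have hJsum : J.card = ∑ κ ∈ C, (J.filter (fun p => f (Sum.inl p.1) = κ)).card :=
    Finset.card_eq_sum_card_fiberwise (fun p hp => Finset.mem_image_of_mem f (hmemU p hp))
  have hJk : ∀ κ, (J.filter (fun p => f (Sum.inl p.1) = κ)).card ≤ (Rk κ).card * (Ck κ).card := by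
    intro κ
    rw [← Finset.card_product]
    apply Finset.card_le_card
    intro p hp
    rw [Finset.mem_filter] at hp
    rw [Finset.mem_product]
    constructor
    · rw [hRk]; simp only [Finset.mem_filter]
      exact ⟨Finset.mem_image_of_mem _ hp.1, hp.2⟩
    · rw [hCk]; simp only [Finset.mem_filter]
      exact ⟨Finset.mem_image_of_mem _ hp.1, by rw [← hsame p hp.1]; exact hp.2⟩
  have hpos : ∀ κ ∈ C, 1 ≤ (Rk κ).card ∧ 1 ≤ (Ck κ).card := by
    intro κ hκ
    obtain ⟨u, hu, rfl⟩ := Finset.mem_image.mp hκ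
    have : ∃ p ∈ J, f (Sum.inl p.1) = f u := by
      rw [hUdef, Finset.mem_union] at hu
      rcases hu with hu | hu
      · obtain ⟨i, hi, rfl⟩ := Finset.mem_image.mp hu
        obtain ⟨p, hp, hpi⟩ := Finset.mem_image.mp hi
        exact ⟨p, hp, by rw [hpi]⟩
      · obtain ⟨j, hj, rfl⟩ := Finset.mem_image.mp hu
        obtain ⟨p, hp, hpj⟩ := Finset.mem_image.mp hj
        exact ⟨p, hp, by rw [hsame p hp, hpj]⟩
    obtain ⟨p, hp, hpf⟩ := this
    constructor
    · refine Finset.card_pos.mpr ⟨p.1, ?_⟩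
      rw [hRk]; simp only [Finset.mem_filter]
      exact ⟨Finset.mem_image_of_mem _ hp, hpf⟩
    · refine Finset.card_pos.mpr ⟨p.2, ?_⟩
      rw [hCk]; simp only [Finset.mem_filter]
      exact ⟨Finset.mem_image_of_mem _ hp, by rw [← hsame p hp]; exact hpf⟩
  set t : (Fin N ⊕ Fin N) → ℕ := fun κ => (Rk κ).card + (Ck κ).card - 1 with ht
  have htk : ∀ κ ∈ C, t κ + 1 = (Rk κ).card + (Ck κ).card := by
    intro κ hκ
    have := hpos κ hκ
    simp only [ht]
    omega
  have hCne : C.Nonempty := by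
    obtain ⟨p, hp⟩ := hJ
    exact ⟨f (Sum.inl p.1), Finset.mem_image_of_mem f (hmemU p hp)⟩
  have htpos : ∀ κ ∈ C, 1 ≤ t κ := by
    intro κ hκ
    have := hpos κ hκ
    simp only [ht]
    omega
  -- sum of t
  have hsumt : ∑ κ ∈ C, t κ + C.card = U.card := by
    have e1 : ∑ κ ∈ C, (t κ + 1) = ∑ κ ∈ C, (U.filter (fun u => f u = κ)).card :=
      Finset.sum_congr rfl (fun κ hκ => by rw [htk κ hκ, hfib κ])
    rw [Finset.sum_add_distrib, Finset.sum_const, smul_eq_mul, mul_one] at e1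
    omega
  have hsumtle : ∑ κ ∈ C, t κ ≤ r := by omega
  -- main inequality
  have hmain : 4 * J.card ≤ (r + 1)^2 := by
    calc 4 * J.card = ∑ κ ∈ C, 4 * (J.filter (fun p => f (Sum.inl p.1) = κ)).card := by
          rw [hJsum, Finset.mul_sum]
      _ ≤ ∑ κ ∈ C, (t κ + 1)^2 := by
          apply Finset.sum_le_sum
          intro κ hκ
          have h1 := hJk κ
          have h2 := htk κ hκ
          nlinarith [hJk κ, htk κ hκ, sq_nonneg ((Rk κ).card - (Ck κ).card : ℤ)]
      _ ≤ (∑ κ ∈ C, t κ + 1)^2 := sum_sq_le t hCne htpos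
      _ ≤ (r + 1)^2 := by
          apply Nat.pow_le_pow_left
          omega
  -- conclude
  have hceil : ⌈2 * Real.sqrt J.card⌉₊ ≤ r + 1 := by
    rw [Nat.ceil_le]
    have hq : (0:ℝ) ≤ (J.card : ℝ) := Nat.cast_nonneg _
    have hs := Real.sq_sqrt hq
    have hs2 : (0:ℝ) ≤ Real.sqrt J.card := Real.sqrt_nonneg _
    have h4 : (4:ℝ) * J.card ≤ ((r:ℝ) + 1)^2 := by
      calc (4:ℝ) * J.card = ((4 * J.card : ℕ) : ℝ) := by push_cast; ring
        _ ≤ (((r+1)^2 : ℕ) : ℝ) := by exact_mod_cast hmain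
        _ = ((r:ℝ)+1)^2 := by push_cast; ring
    push_cast
    nlinarith [h4, hs, hs2]
  omega
end

section
/- Let q be a prime power p^h and r, K ≥ 1, and let c_0, c_1 > 0 be constants. For K×r integer matrices b = [b_1, …, b_r] with all entries bounded by c_0·p^h in absolute value and gcd(p^h, b) ≤ c_1 (gcd of p^h with all entries of b), one has ∑_b ∏_{j=1}^r gcd(p^h, b_j)^{K+1} ≪ p^{h(rK + r − 1 + ε)}, where gcd(p^h, b_j) denotes the gcd of p^h and the entries of the column b_j. -/
/-!
Write `g_j = gcd(p^h, b_j)`. Divisors of `p^h` form a chain, so `∏ⱼ g_j ≤ min_j g_j · (p^h)^(r-1)`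
with `min_j g_j = gcd(p^h, b) ≤ c₁`, while `g_j^K ≤ ∏ₖ gcd(p^h, b_{kj})`. Hence the summand is at
most `c₁ (p^h)^(r-1) ∏_{k,j} gcd(p^h, b_{kj})`, and the sum of this over all matrices factors into
`Kr` copies of `∑_{|x| ≤ c₀ p^h} gcd(p^h, x) ≤ (h+1)(2c₀+1) p^h`. Finally `(h+1)^{Kr} ≪ p^{hε}`.
-/

open Finset

def gcdWith {α : Type*} [Fintype α] (n : ℕ) (v : α → ℤ) : ℕ :=
  n.gcd (univ.gcd fun a => (v a).natAbs)

theorem Int.card_filter_dvd_Icc_mul_le {d : ℤ} (hd : 0 < d) (M : ℤ) :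
    #{x ∈ Icc (-(d * M)) (d * M) | d ∣ x} ≤ #(Icc (-M) M) := by
  refine (card_le_card fun x hx => ?_).trans (card_image_le (f := (d * ·)))
  obtain ⟨hx, k, rfl⟩ := mem_filter.1 hx
  rw [mem_Icc] at hx
  exact mem_image.2 ⟨k, mem_Icc.2 ⟨by nlinarith, by nlinarith⟩, rfl⟩

theorem Nat.sum_gcd_natAbs_Icc_le {n : ℕ} (hn : 0 < n) (c : ℕ) :
    ∑ x ∈ Icc (-(c * n : ℤ)) (c * n), n.gcd x.natAbs ≤ #n.divisors * ((2 * c + 1) * n) := by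
  set I := Icc (-(c * n : ℤ)) (c * n)
  have hgcd : ∀ x : ℤ, n.gcd x.natAbs ≤ ∑ d ∈ n.divisors with ((d : ℕ) : ℤ) ∣ x, d := fun x =>
    single_le_sum (f := id) (fun _ _ => Nat.zero_le _) (mem_filter.2
      ⟨mem_divisors.2 ⟨gcd_dvd_left _ _, hn.ne'⟩, Int.natCast_dvd.2 (gcd_dvd_right _ _)⟩)
  have hcount : ∀ d ∈ n.divisors, #{x ∈ I | (d : ℤ) ∣ x} * d ≤ (2 * c + 1) * n := by
    intro d hd
    obtain ⟨m, rfl⟩ := (mem_divisors.1 hd).1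
    have hd0 : 0 < d := Nat.pos_of_mul_pos_right hn
    have hm0 : 0 < m := Nat.pos_of_mul_pos_left hn
    have hI : I = Icc (-(d * ((c * m : ℕ) : ℤ))) (d * ((c * m : ℕ) : ℤ)) := by
      simp only [I]; push_cast; ring_nf
    have hcard := Int.card_filter_dvd_Icc_mul_le (by positivity : (0 : ℤ) < d) ((c * m : ℕ) : ℤ)
    rw [← hI, Int.card_Icc] at hcard
    have : #{x ∈ I | (d : ℤ) ∣ x} ≤ 2 * (c * m) + 1 := by omega
    nlinarith
  calc ∑ x ∈ I, n.gcd x.natAbs ≤ ∑ x ∈ I, ∑ d ∈ n.divisors with ((d : ℕ) : ℤ) ∣ x, d :=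
        sum_le_sum fun x _ => hgcd x
    _ = ∑ d ∈ n.divisors, #{x ∈ I | (d : ℤ) ∣ x} * d := by
        simp only [sum_filter]
        rw [sum_comm]
        simp only [← sum_filter, sum_const, smul_eq_mul]
    _ ≤ ∑ _d ∈ n.divisors, (2 * c + 1) * n := sum_le_sum hcount
    _ = #n.divisors * ((2 * c + 1) * n) := by rw [sum_const, smul_eq_mul]

theorem Nat.prod_le_gcd_mul_pow_of_dvd_prime_pow {ι : Type*} [Fintype ι] [Nonempty ι]
    {p k : ℕ} (hp : p.Prime) {g : ι → ℕ} (hg : ∀ i, g i ∣ p ^ k) :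
    ∏ i, g i ≤ univ.gcd g * (p ^ k) ^ (Fintype.card ι - 1) := by
  have hpk : 0 < p ^ k := pow_pos hp.pos k
  obtain ⟨i₀, -, hmin⟩ := exists_min_image univ g univ_nonempty
  -- divisors of a prime power are totally ordered by divisibility
  have hdvd : ∀ i, g i₀ ∣ g i := fun i => by
    obtain ⟨a, -, ha⟩ := (Nat.dvd_prime_pow hp).1 (hg i₀)
    obtain ⟨b, -, hb⟩ := (Nat.dvd_prime_pow hp).1 (hg i)
    have hle := hmin i (mem_univ i)
    rw [ha, hb] at hle ⊢
    exact Nat.pow_dvd_pow p ((Nat.pow_le_pow_iff_right hp.one_lt).1 hle)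
  have hg₀ : 0 < g i₀ := Nat.pos_of_dvd_of_pos (hg i₀) hpk
  have hgcd : g i₀ ≤ univ.gcd g :=
    Nat.le_of_dvd (Nat.pos_of_ne_zero (Finset.gcd_ne_zero_iff.2 ⟨i₀, mem_univ _, hg₀.ne'⟩))
      (Finset.dvd_gcd fun i _ => hdvd i)
  classical
  rw [← mul_prod_erase univ g (mem_univ i₀)]
  refine Nat.mul_le_mul hgcd ?_
  calc ∏ i ∈ univ.erase i₀, g i ≤ ∏ _i ∈ univ.erase i₀, p ^ k :=
        prod_le_prod' fun i _ => Nat.le_of_dvd hpk (hg i)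
    _ = (p ^ k) ^ (Fintype.card ι - 1) := by
        rw [prod_const, card_erase_of_mem (mem_univ _), Finset.card_univ]

section gcdWith

variable {κ ι : Type*} [Fintype κ] [Fintype ι]

theorem gcdWith_pos {n : ℕ} (hn : 0 < n) (v : κ → ℤ) : 0 < gcdWith n v :=
  Nat.gcd_pos_of_pos_left _ hn

theorem gcdWith_pow_card_le_prod {n : ℕ} (hn : 0 < n) (v : κ → ℤ) :
    gcdWith n v ^ Fintype.card κ ≤ ∏ k, n.gcd (v k).natAbs := by
  rw [← card_univ, ← prod_const]
  exact prod_le_prod' fun k _ => Nat.le_of_dvd (Nat.gcd_pos_of_pos_left _ hn)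
    (Nat.dvd_gcd (Nat.gcd_dvd_left _ _) ((Nat.gcd_dvd_right _ _).trans (gcd_dvd (mem_univ k))))

theorem gcd_gcdWith_col_dvd_gcdWith [Nonempty ι] (n : ℕ) (b : κ × ι → ℤ) :
    univ.gcd (fun j => gcdWith n fun k => b (k, j)) ∣ gcdWith n b := by
  obtain ⟨j₀⟩ := ‹Nonempty ι›
  refine Nat.dvd_gcd ((gcd_dvd (mem_univ j₀)).trans (Nat.gcd_dvd_left _ _)) (dvd_gcd fun q _ => ?_)
  exact (gcd_dvd (mem_univ q.2)).trans ((Nat.gcd_dvd_right _ _).trans (gcd_dvd (mem_univ q.1)))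

theorem prod_gcdWith_col_pow_card_succ_le [Nonempty ι] {p : ℕ} (hp : p.Prime) (h : ℕ)
    (b : κ × ι → ℤ) :
    ∏ j, (gcdWith (p ^ h) fun k => b (k, j)) ^ (Fintype.card κ + 1)
      ≤ gcdWith (p ^ h) b * (p ^ h) ^ (Fintype.card ι - 1) * ∏ q, (p ^ h).gcd (b q).natAbs := by
  have hph : 0 < p ^ h := pow_pos hp.pos h
  set g := fun j => gcdWith (p ^ h) fun k => b (k, j)
  have hcols : ∏ j, g j ≤ gcdWith (p ^ h) b * (p ^ h) ^ (Fintype.card ι - 1) :=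
    (Nat.prod_le_gcd_mul_pow_of_dvd_prime_pow hp fun j => Nat.gcd_dvd_left _ _).trans
      (Nat.mul_le_mul_right _ (Nat.le_of_dvd (gcdWith_pos hph b)
        (gcd_gcdWith_col_dvd_gcdWith _ b)))
  have hentries : ∏ j, g j ^ Fintype.card κ ≤ ∏ q, (p ^ h).gcd (b q).natAbs :=
    calc ∏ j, g j ^ Fintype.card κ ≤ ∏ j, ∏ k, (p ^ h).gcd (b (k, j)).natAbs :=
          prod_le_prod' fun j _ => gcdWith_pow_card_le_prod hph _
      _ = ∏ q, (p ^ h).gcd (b q).natAbs := 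
        (Fintype.prod_prod_type_right fun q => (p ^ h).gcd (b q).natAbs).symm
  calc ∏ j, g j ^ (Fintype.card κ + 1) = (∏ j, g j ^ Fintype.card κ) * ∏ j, g j := by
        simp only [pow_succ, prod_mul_distrib]
    _ ≤ (∏ q, (p ^ h).gcd (b q).natAbs) * (gcdWith (p ^ h) b * (p ^ h) ^ (Fintype.card ι - 1)) :=
        Nat.mul_le_mul hentries hcols
    _ = _ := mul_comm _ _

end gcdWith

theorem sum_prod_gcdWith_col_pow_card_succ_le {κ ι : Type*} [Fintype κ] [Fintype ι]
    [DecidableEq κ] [DecidableEq ι] [Nonempty ι]    {p : ℕ} (hp : p.Prime) (h c c₁ : ℕ) :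
    ∑ b ∈ (Fintype.piFinset fun _ : κ × ι => Icc (-(c * (p : ℤ) ^ h)) (c * (p : ℤ) ^ h)) with
        gcdWith (p ^ h) b ≤ c₁,
      ∏ j, (gcdWith (p ^ h) fun k => b (k, j)) ^ (Fintype.card κ + 1)
      ≤ c₁ * (p ^ h) ^ (Fintype.card ι - 1) *
          ((h + 1) * ((2 * c + 1) * p ^ h)) ^ (Fintype.card κ * Fintype.card ι) := by
  set I := Icc (-(c * (p : ℤ) ^ h)) (c * (p : ℤ) ^ h)
  have hentry : ∑ x ∈ I, (p ^ h).gcd x.natAbs ≤ (h + 1) * ((2 * c + 1) * p ^ h) := by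
    have := Nat.sum_gcd_natAbs_Icc_le (pow_pos hp.pos h) c
    rwa [Nat.divisors_prime_pow hp, card_map, card_range, Nat.cast_pow] at this
  calc _ ≤ ∑ b ∈ (Fintype.piFinset fun _ : κ × ι => I) with gcdWith (p ^ h) b ≤ c₁,
          c₁ * (p ^ h) ^ (Fintype.card ι - 1) * ∏ q, (p ^ h).gcd (b q).natAbs :=
        sum_le_sum fun b hb => (prod_gcdWith_col_pow_card_succ_le hp h b).trans
          (by gcongr; exact (mem_filter.1 hb).2)
    _ ≤ ∑ b ∈ Fintype.piFinset fun _ : κ × ι => I,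
          c₁ * (p ^ h) ^ (Fintype.card ι - 1) * ∏ q, (p ^ h).gcd (b q).natAbs :=
        sum_le_sum_of_subset (filter_subset _ _)
    _ = c₁ * (p ^ h) ^ (Fintype.card ι - 1) *
          (∑ x ∈ I, (p ^ h).gcd x.natAbs) ^ (Fintype.card κ * Fintype.card ι) := by
        rw [← mul_sum, sum_prod_piFinset I fun _ x => (p ^ h).gcd x.natAbs, prod_const, Finset.card_univ, Fintype.card_prod]
    _ ≤ _ := by gcongr

theorem exists_add_one_pow_le_mul_rpow (A : ℕ) {ε : ℝ} (hε : 0 < ε) :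
    ∃ C > 0, ∀ x : ℝ, 0 ≤ x → ∀ y : ℝ, 2 ≤ y → (x + 1) ^ A ≤ C * y ^ (x * ε) := by
  set t := ε * Real.log 2
  have ht : 0 < t := mul_pos hε (Real.log_pos one_lt_two)
  refine ⟨A.factorial * Real.exp t / t ^ A, by positivity, fun x hx y hy => ?_⟩
  have hexp := Real.pow_div_factorial_le_exp (x := t * (x + 1)) (by positivity) A
  have h2 : Real.exp (t * (x + 1)) = Real.exp t * 2 ^ (x * ε) := by
    rw [Real.rpow_def_of_pos two_pos, ← Real.exp_add]
    congr 1
    ring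
  have hy' : (2 : ℝ) ^ (x * ε) ≤ y ^ (x * ε) := Real.rpow_le_rpow (by norm_num) hy (by positivity)
  rw [h2, div_le_iff₀ (by positivity), mul_pow] at hexp
  calc (x + 1) ^ A = t ^ A * (x + 1) ^ A / t ^ A := by field_simp
    _ ≤ Real.exp t * y ^ (x * ε) * A.factorial / t ^ A :=
        div_le_div_of_nonneg_right (hexp.trans (by gcongr)) (by positivity)
    _ = A.factorial * Real.exp t / t ^ A * y ^ (x * ε) := by ring

theorem stmt18_general (r K : ℕ) (hr : 1 ≤ r) (c0 c1 : ℕ)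
    (hc1 : 0 < c1) (ε : ℝ) (hε : 0 < ε) :
    ∃ C : ℝ, 0 < C ∧ ∀ p h : ℕ, p.Prime → 1 ≤ h →
      (∑ b ∈ (Fintype.piFinset fun _ : Fin K × Fin r =>
            Finset.Icc (-(c0 * (p : ℤ) ^ h)) ((c0 : ℤ) * (p : ℤ) ^ h)).filter
          (fun b => Nat.gcd (p ^ h)
            (Finset.univ.gcd fun q : Fin K × Fin r => (b q).natAbs) ≤ c1),
        ∏ j : Fin r,
          ((Nat.gcd (p ^ h) (Finset.univ.gcd fun k : Fin K => (b (k, j)).natAbs) : ℝ))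
            ^ (K + 1))
      ≤ C * (p : ℝ) ^ ((h : ℝ) * (r * K + r - 1 + ε)) := by
  obtain ⟨C, hC, hpoly⟩ := exists_add_one_pow_le_mul_rpow (K * r) hε
  refine ⟨c1 * (2 * c0 + 1) ^ (K * r) * C, by positivity, fun p h hp _ => ?_⟩
  have : Nonempty (Fin r) := Fin.pos_iff_nonempty.mp hr
  have hsum := sum_prod_gcdWith_col_pow_card_succ_le (κ := Fin K) (ι := Fin r) hp h c0 c1
  simp only [Fintype.card_fin] at hsum
  have hp0 : (0 : ℝ) < p := by exact_mod_cast hp.pos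
  have hpow : ((p : ℝ) ^ h) ^ (r - 1) * ((p : ℝ) ^ h) ^ (K * r)
      = (p : ℝ) ^ ((h : ℝ) * (r * K + r - 1)) := by
    rw [← pow_mul, ← pow_mul, ← pow_add, ← Real.rpow_natCast]
    push_cast [Nat.cast_sub hr]
    ring_nf
  calc _ ≤ (c1 : ℝ) * ((p : ℝ) ^ h) ^ (r - 1) * ((h + 1) * ((2 * c0 + 1) * (p : ℝ) ^ h)) ^ (K * r) := by
        exact_mod_cast hsum
    _ = c1 * (2 * c0 + 1) ^ (K * r) * ((h : ℝ) + 1) ^ (K * r) *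
          (p : ℝ) ^ ((h : ℝ) * (r * K + r - 1)) := by
        rw [← hpow, mul_pow, mul_pow]
        ring
    _ ≤ c1 * (2 * c0 + 1) ^ (K * r) * (C * (p : ℝ) ^ ((h : ℝ) * ε)) *
          (p : ℝ) ^ ((h : ℝ) * (r * K + r - 1)) := by
        gcongr
        exact hpoly h h.cast_nonneg p (by exact_mod_cast hp.two_le)
    _ = c1 * (2 * c0 + 1) ^ (K * r) * C * (p : ℝ) ^ ((h : ℝ) * (r * K + r - 1 + ε)) := by
        rw [mul_add (h : ℝ), Real.rpow_add hp0]
        ring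

theorem stmt18 (r K : ℕ) (hr : 1 ≤ r) (hK : 1 ≤ K) (c0 c1 : ℕ)
    (hc0 : 0 < c0) (hc1 : 0 < c1) (ε : ℝ) (hε : 0 < ε) :
    ∃ C : ℝ, 0 < C ∧ ∀ p h : ℕ, p.Prime → 1 ≤ h →
      (∑ b ∈ (Fintype.piFinset fun _ : Fin K × Fin r =>
            Finset.Icc (-(c0 * (p : ℤ) ^ h)) ((c0 : ℤ) * (p : ℤ) ^ h)).filter
          (fun b => Nat.gcd (p ^ h)
            (Finset.univ.gcd fun q : Fin K × Fin r => (b q).natAbs) ≤ c1),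
        ∏ j : Fin r,
          ((Nat.gcd (p ^ h) (Finset.univ.gcd fun k : Fin K => (b (k, j)).natAbs) : ℝ))
            ^ (K + 1))
      ≤ C * (p : ℝ) ^ ((h : ℝ) * (r * K + r - 1 + ε)) :=
  stmt18_general r K hr c0 c1 hc1 ε hε
end
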